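/- arXiv:quant-ph/0007045 — 4 statements merged into one kernel-verified Lean document; each statement's English description precedes it below -/
import Mathlib

section
/- If U is a unitary operator with U(ψ₀ ⊗ a ⊗ blank) = ψ_a ⊗ a ⊗ a and U(ψ₀ ⊗ b ⊗ blank) = ψ_b ⊗ b ⊗ b, where ψ₀, ψ_a, ψ_b, a, b, blank are unit vectors, then ⟨a|b⟩² ⟨ψ_a|ψ_b⟩ = ⟨a|b⟩ (taking ⟨a|b⟩ real). -/
local notation "⟪" x ", " y "⟫" => @inner ℂ _ _ x y

/-- If a unitary `U` on `H_A ⊗ H ⊗ H` clones the unit vectors `a` and `b`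
(sending `ψ₀ ⊗ a ⊗ blank ↦ ψ_a ⊗ a ⊗ a` and `ψ₀ ⊗ b ⊗ blank ↦ ψ_b ⊗ b ⊗ b`),
then `⟨a|b⟩² ⟨ψ_a|ψ_b⟩ = ⟨a|b⟩`.  The tensor product is modelled by an abstract
trilinear map `t` whose values multiply inner products componentwise. -/
theorem cloning_inner_product_identity
    {HA H T : Type*}
    [NormedAddCommGroup HA] [InnerProductSpace ℂ HA]
    [NormedAddCommGroup H] [InnerProductSpace ℂ H]
    [NormedAddCommGroup T] [InnerProductSpace ℂ T]
    (t : HA →ₗ[ℂ] H →ₗ[ℂ] H →ₗ[ℂ] T)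
    (ht : ∀ (x y : HA) (a b u v : H), ⟪t x a u, t y b v⟫ = ⟪x, y⟫ * ⟪a, b⟫ * ⟪u, v⟫)
    (U : T ≃ₗᵢ[ℂ] T)
    (ψ₀ ψa ψb : HA) (a b blank : H)
    (hψ₀ : ‖ψ₀‖ = 1) (hψa : ‖ψa‖ = 1) (hψb : ‖ψb‖ = 1)
    (ha : ‖a‖ = 1) (hb : ‖b‖ = 1) (hblank : ‖blank‖ = 1)
    (hUa : U (t ψ₀ a blank) = t ψa a a)
    (hUb : U (t ψ₀ b blank) = t ψb b b) :
    ⟪a, b⟫ ^ 2 * ⟪ψa, ψb⟫ = ⟪a, b⟫ := by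
  have key := U.inner_map_map (t ψ₀ a blank) (t ψ₀ b blank)
  rw [hUa, hUb, ht, ht] at key
  rw [inner_self_eq_norm_sq_to_K, hψ₀, inner_self_eq_norm_sq_to_K, hblank] at key
  push_cast at key
  rw [one_pow, one_mul, mul_one] at key
  linear_combination key
end

section
/- Shor probability formula: Let f : ℕ → ℕ be periodic with period P, injective on {0,...,P−1}, let Q = Pq + r with 0 ≤ r < P and Q₀ = Pq, let ω = e^{2πi/Q}, and for y ∈ {0,...,Q−1} define Prob(y) = ‖Σ_{x=0}^{Q−1} ω^{xy} |f(x)⟩‖² / Q², where {|f(x)⟩ : x ∈ {0,...,P−1}} are orthonormal vectors. Then if Py ≠ 0 mod Q, Prob(y) = [r sin²((πPy/Q)(Q₀/P + 1)) + (P−r) sin²((πPy/Q)(Q₀/P))] / [Q² sin²(πPy/Q)], and if Py ≡ 0 mod Q, Prob(y) = [r(Q₀+P)² + (P−r)Q₀²] / (Q²P²). -/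
/-!
Writing `x = a * P + b` with `b < P`, periodicity collapses the vector to
`∑_{b<P} ω^{by} S_{n_b} |f(b)⟩`, where `S_n = ∑_{a<n} z^a` with `z = ω^{Py}`, and the residue `b`
occurs `n_b = q + 1` times if `b < r` and `q` times otherwise. By Pythagoras the squared norm is
`r |S_{q+1}|² + (P - r) |S_q|²`. If `Q ∣ Py` then `z = 1` and `|S_n| = n`; otherwise
`z = e^{2iφ} ≠ 1` with `φ = πPy/Q`, and the geometric sum gives `|S_n| = |sin nφ / sin φ|`.
-/

open Finset

theorem Orthonormal.norm_sum_smul_sq {𝕜 E ι : Type*} [RCLike 𝕜] [NormedAddCommGroup E]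
    [InnerProductSpace 𝕜 E] {v : ι → E} (hv : Orthonormal 𝕜 v) (l : ι → 𝕜) (s : Finset ι) :
    ‖∑ i ∈ s, l i • v i‖ ^ 2 = ∑ i ∈ s, ‖l i‖ ^ 2 := by
  simpa using hv.orthogonalFamily.norm_sum l s

theorem Finset.sum_range_ite_lt {M : Type*} [AddCommMonoid M] {r P : ℕ} (hr : r ≤ P) (a b : M) :
    ∑ i ∈ range P, (if i < r then a else b) = r • a + (P - r) • b := by
  rw [← sum_range_add_sum_Ico _ hr, sum_ite_of_true (fun i hi => mem_range.mp hi),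
    sum_ite_of_false (fun i hi => by rw [mem_Ico] at hi; omega)]
  simp

theorem Finset.sum_range_mul_add_eq_sum_residues {M : Type*} [AddCommMonoid M] (g : ℕ → M)
    {P r : ℕ} (hr : r ≤ P) (q : ℕ) :
    ∑ x ∈ range (P * q + r), g x
      = ∑ b ∈ range P, ∑ a ∈ range (q + if b < r then 1 else 0), g (a * P + b) := by
  induction q generalizing g with
  | zero =>
    have hres : ∀ b, ∑ a ∈ range (0 + if b < r then 1 else 0), g (a * P + b)
        = if b < r then g b else 0 := fun b => by split_ifs <;> simp
    rw [mul_zero, zero_add, sum_congr rfl fun b _ => hres b, ← sum_filter]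
    congr 1
    ext b
    simp only [mem_range, mem_filter, iff_and_self]
    omega
  | succ q ih =>
    rw [show P * (q + 1) + r = P + (P * q + r) by ring, sum_range_add, ih, ← sum_add_distrib]
    refine sum_congr rfl fun b _ => ?_
    rw [add_right_comm, sum_range_succ', add_comm]
    simp only [zero_mul, zero_add, add_one_mul, add_right_comm _ P, add_comm P]

theorem Complex.norm_geom_sum_exp_sq {φ : ℝ} (h : exp (I * (2 * φ : ℝ)) ≠ 1) (m : ℕ) :
    ‖∑ a ∈ range m, exp (I * (2 * φ : ℝ)) ^ a‖ ^ 2 = Real.sin (m * φ) ^ 2 / Real.sin φ ^ 2 := by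
  have hsq : ∀ x : ℝ, ‖exp (I * x) - 1‖ ^ 2 = 4 * Real.sin (x / 2) ^ 2 := fun x => by
    rw [norm_exp_I_mul_ofReal_sub_one, norm_mul, Real.norm_eq_abs, mul_pow, sq_abs]
    norm_num
  rw [geom_sum_eq h, ← exp_nat_mul, norm_div, div_pow]
  have : (m : ℂ) * (I * (2 * φ : ℝ)) = I * (2 * (m * φ) : ℝ) := by push_cast; ring
  rw [this, hsq, hsq]
  field_simp

theorem norm_sq_sum_pow_smul_of_periodic {E : Type*} [NormedAddCommGroup E]
    [InnerProductSpace ℂ E] {P r : ℕ} (hr : r ≤ P) (q : ℕ) {ζ : ℂ} (hζ : ‖ζ‖ = 1)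
    {v : ℕ → E} (hv : Function.Periodic v P) (hvo : Orthonormal ℂ fun j : Fin P => v j) :
    ‖∑ x ∈ range (P * q + r), ζ ^ x • v x‖ ^ 2
      = r * ‖∑ a ∈ range (q + 1), (ζ ^ P) ^ a‖ ^ 2
        + (P - r) * ‖∑ a ∈ range q, (ζ ^ P) ^ a‖ ^ 2 := by
  set S : ℕ → ℂ := fun m => ∑ a ∈ range m, (ζ ^ P) ^ a
  set n : ℕ → ℕ := fun b => q + if b < r then 1 else 0
  have hres : ∀ b m, ∑ a ∈ range m, ζ ^ (a * P + b) • v (a * P + b) = (ζ ^ b * S m) • v b :=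
    fun b m => by
      have hva : ∀ a, v (a * P + b) = v b := fun a => by simpa [add_comm] using hv.nat_mul a b
      simp only [S, hva, mul_sum, sum_smul, ← pow_mul, ← pow_add, mul_comm P, add_comm b]
  rw [sum_range_mul_add_eq_sum_residues _ hr, sum_congr rfl fun b _ => hres b _,
    ← Fin.sum_univ_eq_sum_range (fun b => (ζ ^ b * S (n b)) • v b), hvo.norm_sum_smul_sq,
    Fin.sum_univ_eq_sum_range (fun b => ‖ζ ^ b * S (n b)‖ ^ 2)]
  have hcount : ∀ b, ‖S (n b)‖ ^ 2 = if b < r then ‖S (q + 1)‖ ^ 2 else ‖S q‖ ^ 2 := fun b => by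
    simp only [n]; split_ifs <;> rfl
  simp only [norm_mul, norm_pow, hζ, one_pow, one_mul, hcount]
  rw [sum_range_ite_lt hr, nsmul_eq_mul, nsmul_eq_mul, Nat.cast_sub hr]

theorem shor_probability_general
    {E : Type*} [NormedAddCommGroup E] [InnerProductSpace ℂ E]
    (P q r Q : ℕ) (hP : 0 < P) (hr : r < P) (hQ : Q = P * q + r)
    (f : ℕ → ℕ) (hper : ∀ x, f (x + P) = f x)
    (e : ℕ → E) (horth : Orthonormal ℂ (fun j : Fin P => e (f j)))
    (y : ℕ) (hy : y < Q) :
    let ω : ℂ := Complex.exp (2 * (Real.pi : ℂ) * Complex.I / (Q : ℂ))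
    let Q₀ : ℕ := P * q
    let Prob : ℝ :=
      ‖∑ x ∈ Finset.range Q, ω ^ (x * y) • e (f x)‖ ^ 2 / (Q : ℝ) ^ 2
    (¬ (Q ∣ P * y) →
      Prob = ((r : ℝ) * Real.sin (Real.pi * P * y / Q * ((Q₀ : ℝ) / P + 1)) ^ 2
            + ((P : ℝ) - r) * Real.sin (Real.pi * P * y / Q * ((Q₀ : ℝ) / P)) ^ 2)
          / ((Q : ℝ) ^ 2 * Real.sin (Real.pi * P * y / Q) ^ 2)) ∧
    ((Q ∣ P * y) →
      Prob = ((r : ℝ) * ((Q₀ : ℝ) + P) ^ 2 + ((P : ℝ) - r) * (Q₀ : ℝ) ^ 2)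
          / ((Q : ℝ) ^ 2 * (P : ℝ) ^ 2)) := by
  intro ω Q₀ Prob
  have hω : IsPrimitiveRoot ω Q := Complex.isPrimitiveRoot_exp Q (by omega)
  have hQ₀ : (Q₀ : ℝ) / P = q := by simp only [Q₀]; push_cast; field_simp
  have hz : (ω ^ y) ^ P = 1 ↔ Q ∣ P * y := by rw [← pow_mul, hω.pow_eq_one_iff_dvd, mul_comm]
  have hnorm : ‖∑ x ∈ range Q, ω ^ (x * y) • e (f x)‖ ^ 2
      = r * ‖∑ a ∈ range (q + 1), ((ω ^ y) ^ P) ^ a‖ ^ 2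
        + (P - r) * ‖∑ a ∈ range q, ((ω ^ y) ^ P) ^ a‖ ^ 2 := by
    simp only [hQ, mul_comm _ y, pow_mul]
    exact norm_sq_sum_pow_smul_of_periodic hr.le q (by rw [norm_pow, hω.norm'_eq_one (by omega),
      one_pow]) (Function.Periodic.comp hper e) horth
  simp only [Prob, hnorm, hQ₀]
  constructor
  · intro hdvd
    have hexp : (ω ^ y) ^ P = Complex.exp (Complex.I * (2 * (Real.pi * P * y / Q) : ℝ)) := by
      rw [← pow_mul, ← Complex.exp_nat_mul]
      congr 1
      push_cast
      ring
    rw [hexp] at hz ⊢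
    rw [Complex.norm_geom_sum_exp_sq (mt hz.mp hdvd), Complex.norm_geom_sum_exp_sq (mt hz.mp hdvd)]
    push_cast
    rw [mul_comm ((q : ℝ) + 1), mul_comm (q : ℝ)]
    ring
  · intro hdvd
    simp only [hz.mpr hdvd, one_pow, sum_const, card_range, nsmul_eq_mul, mul_one,
      Complex.norm_natCast, Q₀]
    push_cast
    field_simp

/-- Shor probability formula.  Let `f : ℕ → ℕ` be periodic of period `P` and
injective on `{0,…,P-1}`, with `Q = Pq + r`, `0 ≤ r < P`, `Q₀ = Pq`,
`ω = e^{2πi/Q}`, and the kets `|f(0)⟩,…,|f(P-1)⟩` orthonormal.  For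
`y ∈ {0,…,Q-1}` let `Prob(y) = ‖∑_{x<Q} ω^{xy} |f(x)⟩‖² / Q²`.  Then `Prob(y)`
is given by the sine formula when `Py ≢ 0 (mod Q)` and by
`(r(Q₀+P)² + (P-r)Q₀²)/(Q²P²)` when `Py ≡ 0 (mod Q)`. -/
theorem shor_probability
    {E : Type*} [NormedAddCommGroup E] [InnerProductSpace ℂ E]
    (P q r Q : ℕ) (hP : 0 < P) (hr : r < P) (hQ : Q = P * q + r) (hPQ : P ≤ Q)
    (f : ℕ → ℕ) (hper : ∀ x, f (x + P) = f x)
    (hinj : ∀ i j, i < P → j < P → f i = f j → i = j)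
    (e : ℕ → E) (horth : Orthonormal ℂ (fun j : Fin P => e (f j)))
    (y : ℕ) (hy : y < Q) :
    let ω : ℂ := Complex.exp (2 * (Real.pi : ℂ) * Complex.I / (Q : ℂ))
    let Q₀ : ℕ := P * q
    let Prob : ℝ :=
      ‖∑ x ∈ Finset.range Q, ω ^ (x * y) • e (f x)‖ ^ 2 / (Q : ℝ) ^ 2
    (¬ (Q ∣ P * y) →
      Prob = ((r : ℝ) * Real.sin (Real.pi * P * y / Q * ((Q₀ : ℝ) / P + 1)) ^ 2
            + ((P : ℝ) - r) * Real.sin (Real.pi * P * y / Q * ((Q₀ : ℝ) / P)) ^ 2)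
          / ((Q : ℝ) ^ 2 * Real.sin (Real.pi * P * y / Q) ^ 2)) ∧
    ((Q ∣ P * y) →
      Prob = ((r : ℝ) * ((Q₀ : ℝ) + P) ^ 2 + ((P : ℝ) - r) * (Q₀ : ℝ) ^ 2)
          / ((Q : ℝ) ^ 2 * (P : ℝ) ^ 2)) :=
  shor_probability_general P q r Q hP hr hQ f hper e horth y hy
end

section
/- In the setting of Shor's algorithm, suppose N ≥ 2, P ≤ N, Q ≥ N², and y, d are integers with |Py − Qd| ≤ P/2. Then |y/Q − d/P| ≤ 1/(2Q) ≤ 1/(2P²), and hence d/P is a convergent of the continued fraction expansion of y/Q. -/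
/-- In the setting of Shor's algorithm: if `N ≥ 2`, `P ≤ N`, `Q ≥ N²`, and
`|Py - Qd| ≤ P/2`, then `|y/Q - d/P| ≤ 1/(2Q) ≤ 1/(2P²)`, and hence `d/P` is a
convergent of the continued fraction expansion of `y/Q`. -/
theorem shor_convergent (N P Q : ℕ) (y d : ℤ)
    (hN : 2 ≤ N) (hP : 0 < P) (hPN : P ≤ N) (hQ : N ^ 2 ≤ Q)
    (h : |(P : ℝ) * (y : ℝ) - (Q : ℝ) * (d : ℝ)| ≤ (P : ℝ) / 2) :
    |(y : ℝ) / (Q : ℝ) - (d : ℝ) / (P : ℝ)| ≤ 1 / (2 * (Q : ℝ)) ∧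
    1 / (2 * (Q : ℝ)) ≤ 1 / (2 * (P : ℝ) ^ 2) ∧
    ∃ n : ℕ, (GenContFract.of ((y : ℝ) / (Q : ℝ))).convs n = (d : ℝ) / (P : ℝ) := by
  have hQpos : 0 < Q := lt_of_lt_of_le (by positivity) hQ
  have hPR : (0:ℝ) < P := by exact_mod_cast hP
  have hQR : (0:ℝ) < Q := by exact_mod_cast hQpos
  have hPQ2 : (P:ℝ)^2 ≤ (Q:ℝ) := by
    have : P^2 ≤ Q := le_trans (Nat.pow_le_pow_left hPN 2) hQ
    exact_mod_cast this
  -- first claim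
  have key : |(y : ℝ) / (Q : ℝ) - (d : ℝ) / (P : ℝ)| =
      |(P : ℝ) * (y : ℝ) - (Q : ℝ) * (d : ℝ)| / (P * Q) := by
    rw [div_sub_div _ _ (ne_of_gt hQR) (ne_of_gt hPR), abs_div,
      abs_of_pos (mul_pos hQR hPR)]
    ring_nf
  have h1 : |(y : ℝ) / (Q : ℝ) - (d : ℝ) / (P : ℝ)| ≤ 1 / (2 * (Q : ℝ)) := by
    rw [key]
    rw [div_le_div_iff₀ (by positivity) (by positivity)]
    calc |(P:ℝ) * y - Q * d| * (2 * Q) ≤ (P/2) * (2*Q) := by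
          apply mul_le_mul_of_nonneg_right h; positivity
      _ = 1 * (P * Q) := by ring
  have h2 : 1 / (2 * (Q : ℝ)) ≤ 1 / (2 * (P : ℝ) ^ 2) := by
    apply div_le_div_of_nonneg_left one_pos.le (by positivity)
    linarith
  refine ⟨h1, h2, ?_⟩
  -- the rational q = d / P
  set q : ℚ := (d : ℚ) / (P : ℚ) with hq
  have hqR : ((q : ℝ)) = (d : ℝ) / (P : ℝ) := by push_cast [hq]; ring
  have hden_dvd : (q.den : ℤ) ∣ (P : ℤ) := by
    have := Rat.den_dvd d (P : ℤ)
    rwa [Rat.divInt_eq_div, Int.cast_natCast] at this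
  have hden_le : q.den ≤ P := by
    have := Int.le_of_dvd (by exact_mod_cast hP) hden_dvd
    exact_mod_cast this
  have hdenpos : 0 < q.den := q.pos
  -- strict inequality
  have hstrict : |(y : ℝ) / (Q : ℝ) - (q : ℝ)| < 1 / (2 * (q.den : ℝ) ^ 2) := by
    rw [hqR]
    -- integer bound: |Py - Qd| is an integer ≤ P/2
    have hint : |(P : ℤ) * y - (Q : ℤ) * d| * 2 ≤ P := by
      have : |((P : ℤ) * y - (Q : ℤ) * d : ℤ)| * 2 ≤ (P : ℝ) := by
        push_cast
        rw [abs_sub_comm] at h ⊢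
        calc |(Q:ℝ) * d - P * y| * 2 ≤ (P/2) * 2 := by
              apply mul_le_mul_of_nonneg_right _ (by norm_num)
              rw [abs_sub_comm]; rw [abs_sub_comm] at h; exact h
          _ = P := by ring
      exact_mod_cast this
    rcases lt_or_eq_of_le hint with hlt | heq
    · -- strictly less than P/2
      have habs : |(P : ℝ) * y - Q * d| < P / 2 := by
        have : (|(P : ℤ) * y - (Q : ℤ) * d| : ℝ) * 2 < P := by exact_mod_cast hlt
        push_cast at this ⊢
        linarith
      have : |(y : ℝ) / (Q : ℝ) - (d : ℝ) / (P : ℝ)| < 1 / (2 * (Q : ℝ)) := by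
        rw [key, div_lt_div_iff₀ (by positivity) (by positivity)]
        calc |(P:ℝ) * y - Q * d| * (2 * Q) < (P/2) * (2*Q) := by
              apply mul_lt_mul_of_pos_right habs; positivity
          _ = 1 * (P * Q) := by ring
      refine lt_of_lt_of_le this ?_
      apply div_le_div_of_nonneg_left one_pos.le (by positivity)
      have : (q.den : ℝ)^2 ≤ (P:ℝ)^2 := by
        apply pow_le_pow_left₀ (by positivity); exact_mod_cast hden_le
      linarith
    · -- equality case: then q.den^2 < Q
      have hqd2 : q.den ^ 2 < Q := by
        by_contra hc
        push_neg at hc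
        have hd1 : q.den ^ 2 ≤ P ^ 2 := Nat.pow_le_pow_left hden_le 2
        have hd2 : P ^ 2 ≤ N ^ 2 := Nat.pow_le_pow_left hPN 2
        have hQP : Q = P ^ 2 := le_antisymm (le_trans hc hd1) (le_trans hd2 hQ)
        have hQPZ : (Q : ℤ) = (P : ℤ) ^ 2 := by exact_mod_cast hQP
        rw [hQPZ] at heq
        have hfac : |(P:ℤ) * y - (P:ℤ)^2 * d| = (P:ℤ) * |y - P * d| := by
          rw [show (P:ℤ) * y - (P:ℤ)^2 * d = (P:ℤ) * (y - P * d) by ring,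
            abs_mul, abs_of_nonneg (by positivity : (0:ℤ) ≤ (P:ℤ))]
        rw [hfac] at heq
        have hsplit : (P:ℤ) * (|y - P * d| * 2) = (P:ℤ) * 1 := by
          rw [mul_one, ← mul_assoc]; exact heq
        have := mul_left_cancel₀ (by exact_mod_cast hP.ne' : (P:ℤ) ≠ 0) hsplit
        have habs := abs_nonneg (y - (P:ℤ) * d)
        omega
      refine lt_of_le_of_lt h1 ?_
      rw [div_lt_div_iff₀ (by positivity) (by positivity)]
      have : (q.den:ℝ)^2 < Q := by exact_mod_cast hqd2
      linarith
  have := Real.exists_convs_eq_rat hstrict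
  obtain ⟨n, hn⟩ := this
  exact ⟨n, by rw [hn, hqR]⟩
end

section
/- In Grover's algorithm with N ≥ 2, set β = arcsin(1/√N) and K = round(π/(4β) − 1/2). Then the failure probability cos²((2K+1)β) is at most sin²β = 1/N. -/
open Real

/-- Grover failure-probability bound: with `β = arcsin(1/√N)` and
`K = round(π/(4β) - 1/2)`, the failure probability `cos²((2K+1)β)` is at most
`sin²β = 1/N`. -/
theorem grover_failure_probability (N : ℕ) (hN : 2 ≤ N) :
    let β : ℝ := Real.arcsin (1 / Real.sqrt N)
    let K : ℤ := round (π / (4 * β) - 1 / 2)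
    Real.cos ((2 * (K : ℝ) + 1) * β) ^ 2 ≤ Real.sin β ^ 2 ∧
    Real.sin β ^ 2 = 1 / N := by
  intro β K
  have hNpos : (0 : ℝ) < N := by positivity
  have hsqrt1 : (1 : ℝ) ≤ Real.sqrt N := by
    rw [show (1:ℝ) = Real.sqrt 1 by simp]
    exact Real.sqrt_le_sqrt (by exact_mod_cast Nat.one_le_of_lt hN)
  have hsqrtpos : (0 : ℝ) < Real.sqrt N := lt_of_lt_of_le one_pos hsqrt1
  have hx0 : (0 : ℝ) < 1 / Real.sqrt N := by positivity
  have hx1 : (1 : ℝ) / Real.sqrt N ≤ 1 := by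
    rw [div_le_one hsqrtpos]; exact hsqrt1
  have hsin : Real.sin β = 1 / Real.sqrt N :=
    Real.sin_arcsin (by linarith) hx1
  have hβpos : 0 < β := Real.arcsin_pos.mpr hx0
  have hβle : β ≤ π / 2 := Real.arcsin_le_pi_div_two _
  -- sin β ^ 2 = 1 / N
  have hsq : Real.sin β ^ 2 = 1 / N := by
    rw [hsin, div_pow, one_pow, Real.sq_sqrt hNpos.le]
  refine ⟨?_, hsq⟩
  -- bounds on K
  have hround : |π / (4 * β) - 1 / 2 - (K : ℝ)| ≤ 1 / 2 := abs_sub_round _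
  rw [abs_le] at hround
  have h4β : (0 : ℝ) < 4 * β := by linarith
  have hlo : π / 2 - β ≤ (2 * (K : ℝ) + 1) * β := by
    have h1 : π / (4 * β) ≤ (K : ℝ) + 1 := by linarith [hround.1]
    have := (div_le_iff₀ h4β).mp h1
    nlinarith
  have hhi : (2 * (K : ℝ) + 1) * β ≤ π / 2 + β := by
    have h1 : (K : ℝ) ≤ π / (4 * β) := by linarith [hround.2]
    have := (le_div_iff₀ h4β).mp h1
    nlinarith
  have hπ : 0 < π := Real.pi_pos
  have hc1 : Real.cos ((2 * (K : ℝ) + 1) * β) ≤ Real.sin β := by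
    have := Real.cos_le_cos_of_nonneg_of_le_pi (by linarith : 0 ≤ π / 2 - β)
      (by linarith : (2 * (K : ℝ) + 1) * β ≤ π) hlo
    rwa [Real.cos_pi_div_two_sub] at this
  have hc2 : -Real.sin β ≤ Real.cos ((2 * (K : ℝ) + 1) * β) := by
    have := Real.cos_le_cos_of_nonneg_of_le_pi
      (by nlinarith : (0:ℝ) ≤ (2 * (K : ℝ) + 1) * β)
      (by linarith : π / 2 + β ≤ π) hhi
    rw [Real.cos_add, Real.cos_pi_div_two, Real.sin_pi_div_two] at this; linarith
  exact sq_le_sq' hc2 hc1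
end
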